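/- arXiv:0711.4175 — 3 statements merged into one kernel-verified Lean document; each statement's English description precedes it below -/
import Mathlib

section
/- For every finite directed graph G and every integer s ≥ 2: g(G,s) = E(G,s) ≥ E^public(G,s) ≥ g^public(G,s); in particular the guessing number of G is at least the public guessing number of G. -/
open Finset

/-! ## Basic setup: directed graphs, guessing games, entropy (Riis, "Graph Entropy,
Network Coding and Guessing games"). -/

/-- The set `N⁻(j)` of in-neighbours of a vertex `j` in the directed graph given by
the edge relation `E` (an edge `(i,j)` is `E i j`). -/
def inNbr {V : Type*} [Fintype V] (E : V → V → Prop) [DecidableRel E] (j : V) : Finset V :=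
  Finset.univ.filter (fun i => E i j)

/-- `p` is a probability distribution on `V → A`. -/
def IsProbDist {V A : Type*} [Fintype V] [DecidableEq V] [Fintype A] (p : (V → A) → ℝ) : Prop :=
  (∀ x, 0 ≤ p x) ∧ ∑ x : V → A, p x = 1

/-- The marginal probability, under `p`, that the coordinates in `S` agree with `y`. -/
noncomputable def marginalPMF {V A : Type*} [Fintype V] [DecidableEq V] [Fintype A] [DecidableEq A]
    (p : (V → A) → ℝ) (S : Finset V) (y : ↥S → A) : ℝ :=
  ∑ x : V → A, if ∀ i : ↥S, x i.1 = y i then p x else 0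

/-- `Hent s p S` : the base-`s` Shannon entropy of the marginal of `p` on the
coordinates in `S` (using `Real.negMulLog`, so the convention `0·log(1/0) = 0` holds). -/
noncomputable def Hent {V A : Type*} [Fintype V] [DecidableEq V] [Fintype A] [DecidableEq A]
    (s : ℕ) (p : (V → A) → ℝ) (S : Finset V) : ℝ :=
  (∑ y : ↥S → A, Real.negMulLog (marginalPMF p S y)) / Real.log s

/-- `p` satisfies the information constraints of the graph: `H(j | N⁻(j)) = 0` for every
vertex `j`, where `H(X | Y) = H(X ∪ Y) − H(Y)`. -/
def InfoConstraints {V A : Type*} [Fintype V] [DecidableEq V] [Fintype A] [DecidableEq A]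
    (E : V → V → Prop) [DecidableRel E] (s : ℕ) (p : (V → A) → ℝ) : Prop :=
  ∀ j : V, Hent s p (insert j (inNbr E j)) - Hent s p (inNbr E j) = 0

/-- The (private) entropy `E(G,s)` of the graph over an alphabet of size `s`:
the sup of `H_p(V)` over probability distributions on `A^V` (`A = Fin s`)
satisfying the information constraints of the graph. -/
noncomputable def graphEntropy {V : Type*} [Fintype V] [DecidableEq V]
    (E : V → V → Prop) [DecidableRel E] (s : ℕ) : ℝ :=
  sSup {h : ℝ | ∃ p : (V → Fin s) → ℝ,
    IsProbDist p ∧ InfoConstraints E s p ∧ h = Hent s p Finset.univ}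

/-- The general entropy `E(G) = sup_{s ≥ 2} E(G,s)`. -/
noncomputable def genEntropy {V : Type*} [Fintype V] [DecidableEq V]
    (E : V → V → Prop) [DecidableRel E] : ℝ :=
  sSup {h : ℝ | ∃ s : ℕ, 2 ≤ s ∧ h = graphEntropy E s}

/-- A guessing strategy: each vertex `j` guesses a value `g j x` which may only depend on
the values `x i` for in-neighbours `i` of `j`. -/
def IsStrategy {V A : Type*} (E : V → V → Prop) (g : V → (V → A) → A) : Prop :=
  ∀ j x y, (∀ i, E i j → x i = y i) → g j x = g j y

/-- The set of assignments at which all players guess correctly. -/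
def correctSet {V A : Type*} [Fintype V] [DecidableEq V] [Fintype A] [DecidableEq A]
    (g : V → (V → A) → A) : Finset (V → A) :=
  Finset.univ.filter (fun x => ∀ j, g j x = x j)

/-- The maximal number of assignments at which all players guess correctly,
over all guessing strategies (over the alphabet `Fin s`). -/
noncomputable def maxCorrect {V : Type*} [Fintype V] [DecidableEq V]
    (E : V → V → Prop) [DecidableRel E] (s : ℕ) : ℕ :=
  sSup {m : ℕ | ∃ g : V → (V → Fin s) → Fin s, IsStrategy E g ∧ m = (correctSet g).card}

/-- The maximal probability (with `x` uniform on `A^V`) that all players guess correctly. -/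
noncomputable def maxProb {V : Type*} [Fintype V] [DecidableEq V]
    (E : V → V → Prop) [DecidableRel E] (s : ℕ) : ℝ :=
  (maxCorrect E s : ℝ) / (s : ℝ) ^ Fintype.card V

/-- The guessing number `g(G,s)`: the unique `α` with maximal success probability
`(1/s)^(n−α)`, i.e. `α = n + log_s (maximal probability)`. -/
noncomputable def guessingNumber {V : Type*} [Fintype V] [DecidableEq V]
    (E : V → V → Prop) [DecidableRel E] (s : ℕ) : ℝ :=
  (Fintype.card V : ℝ) + Real.logb s (maxProb E s)

/-- The general guessing number `g(G) = sup_{s ≥ 2} g(G,s)`. -/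
noncomputable def genGuessing {V : Type*} [Fintype V] [DecidableEq V]
    (E : V → V → Prop) [DecidableRel E] : ℝ :=
  sSup {h : ℝ | ∃ s : ℕ, 2 ≤ s ∧ h = guessingNumber E s}

/-! ## Entropy-like functions -/

/-- An S-entropy-like function: `f ∅ = 0`, monotone and submodular (the polymatroidal
axioms, equivalently Shannon's information inequalities). -/
def SEntLike {U : Type*} [DecidableEq U] (f : Finset U → ℝ) : Prop :=
  f ∅ = 0 ∧ (∀ X Y, X ⊆ Y → f X ≤ f Y) ∧ ∀ X Y, f (X ∩ Y) + f (X ∪ Y) ≤ f X + f Y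

/-- Mutual information `I_f(X;Y|Z)` of an entropy-like function. -/
def mutI {U : Type*} [DecidableEq U] (f : Finset U → ℝ) (X Y Z : Finset U) : ℝ :=
  f (X ∪ Z) + f (Y ∪ Z) - f (X ∪ Y ∪ Z) - f Z

/-- A Zhang–Yeung entropy-like function: S-entropy-like and satisfying the ZY
non-Shannon information inequality for all `A B C D`. -/
def ZYEntLike {U : Type*} [DecidableEq U] (f : Finset U → ℝ) : Prop :=
  SEntLike f ∧ ∀ A B C D : Finset U,
    2 * mutI f C D ∅ ≤ mutI f A B ∅ + mutI f A (C ∪ D) ∅ + 3 * mutI f C D A + mutI f C D B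

/-- `f` satisfies the information constraints of the graph:
`f(N⁻(j) ∪ {j}) = f(N⁻(j))` for every vertex `j`. -/
def FConstraints {V : Type*} [Fintype V] [DecidableEq V]
    (E : V → V → Prop) [DecidableRel E] (f : Finset V → ℝ) : Prop :=
  ∀ j : V, f (insert j (inNbr E j)) = f (inNbr E j)

/-- The S-entropy `E_S(G)`: the maximal value of `f(V)` over normalized S-entropy-like
functions satisfying the information constraints of `G`. -/
noncomputable def SEnt {V : Type*} [Fintype V] [DecidableEq V]
    (E : V → V → Prop) [DecidableRel E] : ℝ :=
  sSup {h : ℝ | ∃ f : Finset V → ℝ,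
    SEntLike f ∧ (∀ j : V, f {j} ≤ 1) ∧ FConstraints E f ∧ h = f Finset.univ}

/-- The ZY-entropy `E_ZY(G)`. -/
noncomputable def ZYEnt {V : Type*} [Fintype V] [DecidableEq V]
    (E : V → V → Prop) [DecidableRel E] : ℝ :=
  sSup {h : ℝ | ∃ f : Finset V → ℝ,
    ZYEntLike f ∧ (∀ j : V, f {j} ≤ 1) ∧ FConstraints E f ∧ h = f Finset.univ}

/-! ## Acyclicity -/

/-- The subgraph induced on `S` is acyclic: no directed cycle within `S`. -/
def AcyclicOn {V : Type*} (E : V → V → Prop) (S : Finset V) : Prop :=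
  ∀ v ∈ S, ¬ Relation.TransGen (fun a b => a ∈ S ∧ b ∈ S ∧ E a b) v v

/-- The acyclic independence number: the maximal size of a vertex set inducing an
acyclic subgraph. -/
noncomputable def acycIndepNum {V : Type*} [Fintype V] (E : V → V → Prop) : ℕ :=
  sSup {k : ℕ | ∃ S : Finset V, AcyclicOn E S ∧ k = S.card}

/-! ## Index codes -/

/-- An index code protocol: a broadcast map `Φ` together with decoding functions `d j`
(depending only on the in-neighbour values and the broadcast message) recovering `x j`. -/
def IsIndexCode {V A W : Type*} (E : V → V → Prop)
    (Φ : (V → A) → W) (d : V → (V → A) → W → A) : Prop :=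
  (∀ (j : V) (x y : V → A) (w : W), (∀ i, E i j → x i = y i) → d j x w = d j y w) ∧
  ∀ (x : V → A) (j : V), d j x (Φ x) = x j

/-- The length `log_s |Φ(A^V)|` of an index code protocol. -/
noncomputable def protocolLength {V A W : Type*} [Fintype V] [DecidableEq V] [Fintype A]
    [Fintype W] [DecidableEq W] (s : ℕ) (Φ : (V → A) → W) : ℝ :=
  Real.logb s ((Finset.univ.image Φ).card)

/-- The base-`s` entropy of the broadcast message `Φ(x)` for `x` uniform on `A^V`. -/
noncomputable def protocolEntropy {V A W : Type*} [Fintype V] [DecidableEq V] [Fintype A]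
    [DecidableEq A] [Fintype W] [DecidableEq W] (s : ℕ) (Φ : (V → A) → W) : ℝ :=
  (∑ w : W, Real.negMulLog
    (((Finset.univ.filter (fun x : V → A => Φ x = w)).card : ℝ) / (s : ℝ) ^ Fintype.card V))
    / Real.log s

/-- `i(G,s)`: the minimal length of an index code for `G` over `Fin s`. -/
noncomputable def indexCodeLen {V : Type*} [Fintype V] [DecidableEq V]
    (E : V → V → Prop) [DecidableRel E] (s : ℕ) : ℝ :=
  sInf {h : ℝ | ∃ (W : Type) (iW : Fintype W) (dW : DecidableEq W)
    (Φ : (V → Fin s) → W) (d : V → (V → Fin s) → W → Fin s),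
    IsIndexCode E Φ d ∧ h = @protocolLength V (Fin s) W _ _ _ iW dW s Φ}

/-- `i_entro(G,s)`: the minimal entropy of an index code for `G` over `Fin s`. -/
noncomputable def indexCodeEntro {V : Type*} [Fintype V] [DecidableEq V]
    (E : V → V → Prop) [DecidableRel E] (s : ℕ) : ℝ :=
  sInf {h : ℝ | ∃ (W : Type) (iW : Fintype W) (dW : DecidableEq W)
    (Φ : (V → Fin s) → W) (d : V → (V → Fin s) → W → Fin s),
    IsIndexCode E Φ d ∧ h = @protocolEntropy V (Fin s) W _ _ _ _ iW dW s Φ}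

/-- The information constraints on `V ∪ {w}` (`w = none`) used to define the S/ZY-minimal
index code: `f(N⁻(j) ∪ {w} ∪ {j}) = f(N⁻(j) ∪ {w})` for each `j`, `f(V ∪ {w}) = f(V)`
and `f(V) = n`. -/
def WConstraints {V : Type*} [Fintype V] [DecidableEq V]
    (E : V → V → Prop) [DecidableRel E] (f : Finset (Option V) → ℝ) : Prop :=
  (∀ j : V, f (insert (some j) (insert none ((inNbr E j).image some)))
      = f (insert none ((inNbr E j).image some))) ∧
  f (insert none ((Finset.univ : Finset V).image some))
      = f ((Finset.univ : Finset V).image some) ∧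
  f ((Finset.univ : Finset V).image some) = (Fintype.card V : ℝ)

/-- The S-minimal index code `i_S(G)`. -/
noncomputable def iS {V : Type*} [Fintype V] [DecidableEq V]
    (E : V → V → Prop) [DecidableRel E] : ℝ :=
  sInf {h : ℝ | ∃ f : Finset (Option V) → ℝ,
    SEntLike f ∧ (∀ j : V, f {some j} ≤ 1) ∧ WConstraints E f ∧ h = f {none}}

/-- The ZY-minimal index code `i_ZY(G)`. -/
noncomputable def iZY {V : Type*} [Fintype V] [DecidableEq V]
    (E : V → V → Prop) [DecidableRel E] : ℝ :=
  sInf {h : ℝ | ∃ f : Finset (Option V) → ℝ,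
    ZYEntLike f ∧ (∀ j : V, f {some j} ≤ 1) ∧ WConstraints E f ∧ h = f {none}}

/-! ## The bidirected pentagon `C5` -/

/-- The pentagon with bidirected edges: vertices `Fin 5`, edges between cyclically
adjacent vertices. -/
def E5 : Fin 5 → Fin 5 → Prop := fun i j => (i.1 + 1) % 5 = j.1 ∨ (j.1 + 1) % 5 = i.1

instance : DecidableRel E5 := fun i j => by unfold E5; infer_instance

/-! Both `g(G,s)` and `E(G,s)` equal `log_s` of the largest number of assignments at which some
strategy guesses correctly everywhere. A distribution satisfies the information constraints
exactly when, on its support, the value at each vertex is a function of the values at its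
in-neighbours; such a support lies in the correct set of a strategy, so its entropy is at most
`log_s maxCorrect`, and the uniform distribution on an optimal correct set attains this bound.
The fibres of an index code have the same property, so every message has probability at most
`maxCorrect / s ^ n` and the message entropy is at least `n - E(G,s)`; it is at most the length
because entropy is bounded by the logarithm of the support size. -/

namespace GuessingGame

open Real Finset

section Entropy

variable {ι : Type*}

theorem neg_mul_log_le_negMulLog {a σ : ℝ} (ha : 0 ≤ a) (haσ : a ≤ σ) :
    -(a * log σ) ≤ negMulLog a := by
  rcases ha.eq_or_lt with rfl | ha
  · simp
  rw [negMulLog, neg_mul, neg_le_neg_iff]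
  exact mul_le_mul_of_nonneg_left (log_le_log ha haσ) ha.le

theorem neg_mul_log_eq_negMulLog_iff {a σ : ℝ} (ha : 0 ≤ a) (haσ : a ≤ σ) :
    -(a * log σ) = negMulLog a ↔ a = 0 ∨ a = σ := by
  rcases ha.eq_or_lt with rfl | ha
  · simp
  rw [negMulLog, neg_mul, neg_inj, mul_right_inj' ha.ne', or_iff_right ha.ne', eq_comm]
  exact log_injOn_pos.eq_iff ha (ha.trans_le haσ)

theorem negMulLog_sum_eq_sum_neg_mul_log (t : Finset ι) (f : ι → ℝ) :
    negMulLog (∑ i ∈ t, f i) = ∑ i ∈ t, -(f i * log (∑ j ∈ t, f j)) := by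
  rw [negMulLog, sum_neg_distrib, ← sum_mul, neg_mul]

theorem negMulLog_sum_le {t : Finset ι} {f : ι → ℝ} (hf : ∀ i ∈ t, 0 ≤ f i) :
    negMulLog (∑ i ∈ t, f i) ≤ ∑ i ∈ t, negMulLog (f i) := by
  rw [negMulLog_sum_eq_sum_neg_mul_log]
  exact sum_le_sum fun i hi => neg_mul_log_le_negMulLog (hf i hi) (single_le_sum hf hi)

theorem negMulLog_sum_eq_iff {t : Finset ι} {f : ι → ℝ} (hf : ∀ i ∈ t, 0 ≤ f i) :
    negMulLog (∑ i ∈ t, f i) = ∑ i ∈ t, negMulLog (f i) ↔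
      ∀ i ∈ t, ∀ j ∈ t, f i ≠ 0 → f j ≠ 0 → i = j := by
  rw [negMulLog_sum_eq_sum_neg_mul_log, sum_eq_sum_iff_of_le fun i hi =>
    neg_mul_log_le_negMulLog (hf i hi) (single_le_sum hf hi), forall₂_congr fun i hi =>
    neg_mul_log_eq_negMulLog_iff (hf i hi) (single_le_sum hf hi)]
  constructor
  · intro h i hi j hj hfi hfj
    by_contra hij
    have hsum := add_le_sum hf hi hj hij
    rcases h i hi with h0 | heq
    · exact hfi h0
    · have := lt_of_le_of_ne (hf j hj) (Ne.symm hfj)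
      linarith
  · intro h i hi
    by_cases hfi : f i = 0
    · exact .inl hfi
    · refine .inr (sum_eq_single_of_mem i hi fun j hj hji => ?_).symm
      by_contra hfj
      exact hji (h j hj i hi hfj hfi)

theorem sum_negMulLog_le_log_card [Fintype ι] {q : ι → ℝ} (hq : ∀ i, 0 ≤ q i)
    (hsum : ∑ i, q i = 1) {t : Finset ι} (ht : Function.support q ⊆ t) :
    ∑ i, negMulLog (q i) ≤ log t.card := by
  have hzero : ∀ i ∉ t, q i = 0 := fun i hi => Function.notMem_support.mp fun h => hi (ht h)
  have hsum_t : ∑ i ∈ t, q i = 1 := by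
    rw [← hsum, sum_subset (subset_univ t) fun i _ hi => hzero i hi]
  have hk : (0 : ℝ) < t.card := by
    have : ∑ i ∈ t, q i ≠ 0 := by rw [hsum_t]; exact one_ne_zero
    exact Nat.cast_pos.mpr (card_pos.mpr (nonempty_of_sum_ne_zero this))
  have jensen := concaveOn_negMulLog.le_map_sum (t := t) (w := fun _ => (t.card : ℝ)⁻¹)
    (p := q) (fun _ _ => by positivity) (by simp [hk.ne']) fun i _ => Set.mem_Ici.mpr (hq i)
  simp only [smul_eq_mul, ← mul_sum, hsum_t, mul_one] at jensen
  rw [← sum_subset (subset_univ t) fun i _ hi => by rw [hzero i hi, negMulLog_zero]]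
  rw [negMulLog, log_inv] at jensen
  field_simp at jensen
  linarith

theorem neg_log_le_sum_negMulLog [Fintype ι] {q : ι → ℝ} (hq : ∀ i, 0 ≤ q i)
    (hsum : ∑ i, q i = 1) {M : ℝ} (hM : ∀ i, q i ≤ M) :
    -log M ≤ ∑ i, negMulLog (q i) :=
  calc -log M = ∑ i, -(q i * log M) := by rw [sum_neg_distrib, ← sum_mul, hsum, one_mul]
    _ ≤ ∑ i, negMulLog (q i) := sum_le_sum fun i _ => neg_mul_log_le_negMulLog (hq i) (hM i)

end Entropy

section Marginal

variable {V A : Type*} [Fintype V] [DecidableEq V] [Fintype A] [DecidableEq A]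
  {p : (V → A) → ℝ}

theorem marginalPMF_eq_sum_ite (p : (V → A) → ℝ) (S : Finset V) (y : ↥S → A) :
    marginalPMF p S y = ∑ x, if S.restrict x = y then p x else 0 := by
  simp only [marginalPMF, funext_iff, Finset.restrict_def]

theorem marginalPMF_nonneg (hp : ∀ x, 0 ≤ p x) (S : Finset V) (y : ↥S → A) :
    0 ≤ marginalPMF p S y :=
  sum_nonneg fun x _ => by split_ifs <;> simp [hp x]

theorem marginalPMF_ne_zero_iff (hp : ∀ x, 0 ≤ p x) {S : Finset V} {y : ↥S → A} :
    marginalPMF p S y ≠ 0 ↔ ∃ x, p x ≠ 0 ∧ S.restrict x = y := by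
  rw [marginalPMF_eq_sum_ite, Ne, sum_eq_zero_iff_of_nonneg fun x _ => by
    split_ifs <;> simp [hp x]]
  simp [and_comm]

theorem marginalPMF_eq_sum_fiber (p : (V → A) → ℝ) {S T : Finset V} (hST : S ⊆ T)
    (z : ↥S → A) :
    marginalPMF p S z =
      ∑ y ∈ univ.filter (fun y => @Finset.restrict₂ V (fun _ => A) S T hST y = z),
        marginalPMF p T y := by
  simp only [marginalPMF_eq_sum_ite]
  rw [sum_comm]
  refine sum_congr rfl fun x _ => ?_
  rw [sum_ite_eq]
  simp only [mem_filter, mem_univ, true_and, ← Function.comp_apply (f := Finset.restrict₂ hST),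
    Finset.restrict₂_comp_restrict]

theorem sum_negMulLog_marginalPMF_eq_iff (hp : ∀ x, 0 ≤ p x) {S T : Finset V} (hST : S ⊆ T) :
    ∑ z, negMulLog (marginalPMF p S z) = ∑ y, negMulLog (marginalPMF p T y) ↔
      ∀ x x', p x ≠ 0 → p x' ≠ 0 → S.restrict x = S.restrict x' →
        T.restrict x = T.restrict x' := by
  rw [← sum_fiberwise univ (@Finset.restrict₂ V (fun _ => A) S T hST)]
  simp only [marginalPMF_eq_sum_fiber p hST]
  rw [sum_eq_sum_iff_of_le fun z _ => negMulLog_sum_le fun y _ => marginalPMF_nonneg hp T y]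
  simp only [negMulLog_sum_eq_iff fun y _ => marginalPMF_nonneg hp T y, mem_univ, true_implies,
    mem_filter, true_and, marginalPMF_ne_zero_iff hp]
  constructor
  · intro h x x' hx hx' hS
    refine h _ _ rfl _ ?_ ⟨x, hx, rfl⟩ ⟨x', hx', rfl⟩
    rw [← Function.comp_apply (f := Finset.restrict₂ hST), Finset.restrict₂_comp_restrict,
      ← Function.comp_apply (f := Finset.restrict₂ hST), Finset.restrict₂_comp_restrict, hS]
  · rintro h z y rfl y' hy' ⟨x, hx, rfl⟩ ⟨x', hx', rfl⟩
    refine h x x' hx hx' ?_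
    rw [← Finset.restrict₂_comp_restrict hST, Function.comp_apply, Function.comp_apply, hy']

theorem Hent_eq_Hent_iff {s : ℕ} (hs : 1 < s) (hp : ∀ x, 0 ≤ p x) {S T : Finset V}
    (hST : S ⊆ T) :
    Hent s p S = Hent s p T ↔
      ∀ x x', p x ≠ 0 → p x' ≠ 0 → S.restrict x = S.restrict x' →
        T.restrict x = T.restrict x' := by
  rw [Hent, Hent, div_left_inj' (log_pos (Nat.one_lt_cast.mpr hs)).ne',
    sum_negMulLog_marginalPMF_eq_iff hp hST]

theorem Hent_univ (s : ℕ) (p : (V → A) → ℝ) :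
    Hent s p univ = (∑ x, negMulLog (p x)) / log s := by
  have hbij : Function.Bijective (univ.restrict : (V → A) → ↥(univ : Finset V) → A) :=
    ⟨fun x x' h => funext fun v => congrFun h ⟨v, mem_univ v⟩,
      fun y => ⟨fun v => y ⟨v, mem_univ v⟩, rfl⟩⟩
  rw [Hent, (Fintype.sum_bijective _ hbij _ _ fun x => rfl).symm]
  congr 2 with x
  simp only [marginalPMF_eq_sum_ite, hbij.injective.eq_iff, sum_ite_eq', mem_univ, if_true]

end Marginal

section Determined

variable {V A : Type*} {E : V → V → Prop}

variable (E) in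
def InNbrDetermined (C : Set (V → A)) : Prop :=
  ∀ j, ∀ x ∈ C, ∀ y ∈ C, (∀ i, E i j → x i = y i) → x j = y j

theorem _root_.IsIndexCode.inNbrDetermined_fiber {W : Type*} {Φ : (V → A) → W}
    {d : V → (V → A) → W → A} (h : IsIndexCode E Φ d) (w : W) :
    InNbrDetermined E {x | Φ x = w} := by
  intro j x hx y hy hxy
  rw [← h.2 x j, ← h.2 y j, hx, hy, h.1 j x y w hxy]

theorem _root_.IsStrategy.inNbrDetermined_correctSet [Fintype V] [DecidableEq V] [Fintype A]
    [DecidableEq A] {g : V → (V → A) → A} (hg : IsStrategy E g) :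
    InNbrDetermined E (correctSet g : Set (V → A)) := by
  intro j x hx y hy hxy
  simp only [correctSet, coe_filter, mem_univ, true_and] at hx hy
  rw [← hx j, ← hy j, hg j x y hxy]

theorem restrict_insert_eq_iff [DecidableEq V] {S : Finset V} {j : V} {x y : V → A} :
    (insert j S).restrict x = (insert j S).restrict y ↔
      x j = y j ∧ S.restrict x = S.restrict y := by
  simp [funext_iff]

variable [Fintype V] [DecidableRel E]

theorem restrict_inNbr_eq_iff {j : V} {x y : V → A} :
    (inNbr E j).restrict x = (inNbr E j).restrict y ↔ ∀ i, E i j → x i = y i := by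
  simp [funext_iff, inNbr]

variable [DecidableEq V]

theorem infoConstraints_iff [Fintype A] [DecidableEq A] {s : ℕ} (hs : 1 < s)
    {p : (V → A) → ℝ} (hp : ∀ x, 0 ≤ p x) :
    InfoConstraints E s p ↔ InNbrDetermined E (Function.support p) := by
  refine forall_congr' fun j => ?_
  rw [sub_eq_zero, eq_comm, Hent_eq_Hent_iff hs hp (subset_insert j _)]
  simp only [restrict_insert_eq_iff, restrict_inNbr_eq_iff, Function.mem_support]
  exact ⟨fun h x hx y hy hxy => (h x y hx hy hxy).1,
    fun h x y hx hy hxy => ⟨h x hx y hy hxy, hxy⟩⟩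

open Classical in
/-- Each vertex guesses the assignment of `C` that is consistent with what it sees. -/
theorem InNbrDetermined.exists_isStrategy_subset_correctSet [Fintype A] [DecidableEq A]
    [Nonempty A] {C : Set (V → A)} (hC : InNbrDetermined E C) :
    ∃ g : V → (V → A) → A, IsStrategy E g ∧ C ⊆ correctSet g := by
  let guess (j : V) (t : ↥(inNbr E j) → A) : A :=
    if h : ∃ z ∈ C, (inNbr E j).restrict z = t then h.choose j else Classical.arbitrary A
  refine ⟨fun j x => guess j ((inNbr E j).restrict x),
    fun j x y hxy => congrArg (guess j) (restrict_inNbr_eq_iff.mpr hxy), fun x hx => ?_⟩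
  simp only [correctSet, coe_filter, mem_univ, true_and]
  intro j
  have h : ∃ z ∈ C, (inNbr E j).restrict z = (inNbr E j).restrict x := ⟨x, hx, rfl⟩
  obtain ⟨hzC, hzx⟩ := h.choose_spec
  simp only [guess, dif_pos h]
  exact hC j _ hzC x hx (restrict_inNbr_eq_iff.mp hzx)

end Determined

section Uniform

variable {α : Type*} [DecidableEq α]

noncomputable def unifDist (C : Finset α) (x : α) : ℝ :=
  if x ∈ C then (C.card : ℝ)⁻¹ else 0

theorem support_unifDist (C : Finset α) : Function.support (unifDist C) = C := by
  ext x
  by_cases hx : x ∈ C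
  · simp [unifDist, hx, card_ne_zero_of_mem hx]
  · simp [unifDist, hx]

theorem isProbDist_unifDist {V A : Type*} [Fintype V] [DecidableEq V] [Fintype A]
    [DecidableEq A] {C : Finset (V → A)} (hC : C.Nonempty) : IsProbDist (unifDist C) := by
  refine ⟨fun x => by unfold unifDist; positivity, ?_⟩
  simp only [unifDist]
  rw [sum_ite_mem, univ_inter, sum_const, nsmul_eq_mul,
    mul_inv_cancel₀ (Nat.cast_ne_zero.mpr hC.card_pos.ne')]

theorem sum_negMulLog_unifDist [Fintype α] (C : Finset α) :
    ∑ x, negMulLog (unifDist C x) = log C.card := by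
  simp only [unifDist, apply_ite negMulLog, negMulLog_zero]
  rw [sum_ite_mem, univ_inter, sum_const, nsmul_eq_mul, negMulLog, log_inv]
  rcases C.eq_empty_or_nonempty with rfl | hC
  · simp
  · field_simp [hC.card_pos.ne']

end Uniform

section MaxCorrect

variable {V : Type*} [Fintype V] [DecidableEq V] {E : V → V → Prop} {s : ℕ}

variable (E s) in
theorem bddAbove_card_correctSet :
    BddAbove {m | ∃ g : V → (V → Fin s) → Fin s, IsStrategy E g ∧ m = (correctSet g).card} :=
  ⟨Fintype.card (V → Fin s), by rintro _ ⟨g, -, rfl⟩; exact card_le_univ _⟩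

variable [DecidableRel E]

theorem card_correctSet_le_maxCorrect {g : V → (V → Fin s) → Fin s} (hg : IsStrategy E g) :
    (correctSet g).card ≤ maxCorrect E s :=
  le_csSup (bddAbove_card_correctSet E s) ⟨g, hg, rfl⟩

variable [NeZero s]

variable (E s) in
theorem exists_isStrategy_card_correctSet_eq_maxCorrect :
    ∃ g : V → (V → Fin s) → Fin s, IsStrategy E g ∧ (correctSet g).card = maxCorrect E s := by
  obtain ⟨g, hg, h⟩ := Nat.sSup_mem (s := {m | ∃ g : V → (V → Fin s) → Fin s,
    IsStrategy E g ∧ m = (correctSet g).card}) ⟨_, fun _ _ => 0, fun _ _ _ _ => rfl, rfl⟩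
    (bddAbove_card_correctSet E s)
  exact ⟨g, hg, h.symm⟩

variable (E s) in
theorem maxCorrect_pos : 0 < maxCorrect E s :=
  lt_of_lt_of_le (card_pos.mpr ⟨fun _ => 0, by simp [correctSet]⟩)
    (card_correctSet_le_maxCorrect (g := fun _ _ => 0) fun _ _ _ _ => rfl)

theorem InNbrDetermined.card_le_maxCorrect {C : Finset (V → Fin s)}
    (hC : InNbrDetermined E (C : Set (V → Fin s))) : C.card ≤ maxCorrect E s := by
  obtain ⟨g, hg, hC⟩ := hC.exists_isStrategy_subset_correctSet
  exact (card_le_card (coe_subset.mp hC)).trans (card_correctSet_le_maxCorrect hg)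

end MaxCorrect

section Guessing

variable {V : Type*} [Fintype V] [DecidableEq V] {E : V → V → Prop} [DecidableRel E] {s : ℕ}

theorem log_natCast_le_log_natCast {m n : ℕ} (h : m ≤ n) : log m ≤ log n := by
  rcases m.eq_zero_or_pos with rfl | hm
  · simpa using log_natCast_nonneg n
  · exact log_le_log (Nat.cast_pos.mpr hm) (Nat.cast_le.mpr h)

theorem Hent_le_logb_maxCorrect (hs : 1 < s) {p : (V → Fin s) → ℝ} (hp : IsProbDist p)
    (hic : InfoConstraints E s p) : Hent s p univ ≤ logb s (maxCorrect E s) := by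
  have : NeZero s := ⟨by omega⟩
  obtain ⟨g, hg, hsupp⟩ :=
    ((infoConstraints_iff hs hp.1).mp hic).exists_isStrategy_subset_correctSet
  rw [Hent_univ, logb]
  gcongr
  calc ∑ x, negMulLog (p x) ≤ log (correctSet g).card :=
        sum_negMulLog_le_log_card hp.1 hp.2 hsupp
    _ ≤ log (maxCorrect E s) := log_natCast_le_log_natCast (card_correctSet_le_maxCorrect hg)

theorem graphEntropy_eq_logb_maxCorrect (hs : 1 < s) :
    graphEntropy E s = logb s (maxCorrect E s) := by
  have : NeZero s := ⟨by omega⟩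
  obtain ⟨g, hg, hcard⟩ := exists_isStrategy_card_correctSet_eq_maxCorrect E s
  have hne : (correctSet g).Nonempty := card_pos.mp (hcard ▸ maxCorrect_pos E s)
  refine IsGreatest.csSup_eq ⟨⟨unifDist (correctSet g), isProbDist_unifDist hne, ?_, ?_⟩, ?_⟩
  · rw [infoConstraints_iff hs fun x => (isProbDist_unifDist hne).1 x, support_unifDist]
    exact hg.inNbrDetermined_correctSet
  · rw [Hent_univ, sum_negMulLog_unifDist, hcard, logb]
  · rintro _ ⟨p, hp, hic, rfl⟩
    exact Hent_le_logb_maxCorrect hs hp hic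

theorem guessingNumber_eq_logb_maxCorrect (hs : 1 < s) :
    guessingNumber E s = logb s (maxCorrect E s) := by
  have : NeZero s := ⟨by omega⟩
  have hs0 : (s : ℝ) ≠ 0 := Nat.cast_ne_zero.mpr (NeZero.ne s)
  rw [guessingNumber, maxProb, logb_div (Nat.cast_ne_zero.mpr (maxCorrect_pos E s).ne')
    (pow_ne_zero _ hs0), logb_pow, logb_self_eq_one (Nat.one_lt_cast.mpr hs)]
  ring

end Guessing

section IndexCode

variable {X W : Type*} [Fintype X] [DecidableEq W]

noncomputable def fiberDist (Φ : X → W) (w : W) : ℝ :=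
  (univ.filter fun x => Φ x = w).card / Fintype.card X

theorem fiberDist_nonneg (Φ : X → W) (w : W) : 0 ≤ fiberDist Φ w := by
  unfold fiberDist; positivity

theorem fiberDist_le_one (Φ : X → W) (w : W) : fiberDist Φ w ≤ 1 :=
  div_le_one_of_le₀ (Nat.cast_le.mpr (card_filter_le _ _)) (Nat.cast_nonneg _)

theorem sum_fiberDist [Fintype W] [Nonempty X] (Φ : X → W) : ∑ w, fiberDist Φ w = 1 := by
  simp only [fiberDist]
  rw [← sum_div, ← Nat.cast_sum, ← card_eq_sum_card_fiberwise fun x _ => mem_univ (Φ x),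
    card_univ, div_self (Nat.cast_ne_zero.mpr Fintype.card_ne_zero)]

theorem support_fiberDist_subset (Φ : X → W) :
    Function.support (fiberDist Φ) ⊆ univ.image Φ := by
  intro w hw
  have hcard : (univ.filter fun x => Φ x = w).card ≠ 0 := fun h => hw (by simp [fiberDist, h])
  obtain ⟨x, hx⟩ := card_pos.mp (Nat.pos_of_ne_zero hcard)
  exact mem_coe.mpr (mem_image.mpr ⟨x, mem_univ x, (mem_filter.mp hx).2⟩)

variable {V : Type*} [Fintype V] [DecidableEq V] {s : ℕ} [Fintype W]

theorem protocolEntropy_eq (Φ : (V → Fin s) → W) :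
    protocolEntropy s Φ = (∑ w, negMulLog (fiberDist Φ w)) / log s := by
  simp [protocolEntropy, fiberDist]

theorem protocolEntropy_nonneg (Φ : (V → Fin s) → W) : 0 ≤ protocolEntropy s Φ := by
  rw [protocolEntropy_eq]
  exact div_nonneg (sum_nonneg fun w _ =>
    negMulLog_nonneg (fiberDist_nonneg Φ w) (fiberDist_le_one Φ w)) (log_natCast_nonneg s)

theorem protocolEntropy_le_protocolLength [NeZero s] (Φ : (V → Fin s) → W) :
    protocolEntropy s Φ ≤ protocolLength s Φ := by
  rw [protocolEntropy_eq, protocolLength, logb]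
  gcongr
  exact sum_negMulLog_le_log_card (fiberDist_nonneg Φ) (sum_fiberDist Φ)
    (support_fiberDist_subset Φ)

variable {E : V → V → Prop} [DecidableRel E]

/-- A fibre of an index code is a set of assignments on which every vertex can guess
correctly, so no message is more likely than `maxCorrect / s ^ n`. -/
theorem _root_.IsIndexCode.card_sub_graphEntropy_le_protocolEntropy (hs : 1 < s)
    {Φ : (V → Fin s) → W} {d : V → (V → Fin s) → W → Fin s} (hcode : IsIndexCode E Φ d) :
    (Fintype.card V : ℝ) - graphEntropy E s ≤ protocolEntropy s Φ := by
  have : NeZero s := ⟨by omega⟩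
  have hlog : 0 < log s := log_pos (Nat.one_lt_cast.mpr hs)
  have hfiber : ∀ w, fiberDist Φ w ≤ maxCorrect E s / (s : ℝ) ^ Fintype.card V := by
    intro w
    rw [fiberDist, Fintype.card_fun, Fintype.card_fin, Nat.cast_pow]
    gcongr
    exact InNbrDetermined.card_le_maxCorrect (by simpa using hcode.inNbrDetermined_fiber w)
  have hmin := neg_log_le_sum_negMulLog (fiberDist_nonneg Φ) (sum_fiberDist Φ) hfiber
  rw [log_div (Nat.cast_ne_zero.mpr (maxCorrect_pos E s).ne') (by positivity), log_pow] at hmin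
  rw [graphEntropy_eq_logb_maxCorrect hs, protocolEntropy_eq, logb, sub_le_iff_le_add,
    ← add_div, le_div_iff₀ hlog]
  linarith

end IndexCode

section PublicEntropy

theorem isIndexCode_id {V : Type*} (E : V → V → Prop) (A : Type*) :
    IsIndexCode E (id : (V → A) → V → A) fun j _ w => w j :=
  ⟨fun _ _ _ _ _ => rfl, fun _ _ => rfl⟩

variable {V : Type} [Fintype V] [DecidableEq V] {E : V → V → Prop} [DecidableRel E] {s : ℕ}

theorem card_sub_indexCodeEntro_le_graphEntropy (hs : 1 < s) :
    (Fintype.card V : ℝ) - indexCodeEntro E s ≤ graphEntropy E s := by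
  have : (Fintype.card V : ℝ) - graphEntropy E s ≤ indexCodeEntro E s :=
    le_csInf ⟨_, V → Fin s, inferInstance, inferInstance, id, _, isIndexCode_id E _, rfl⟩ <| by
      rintro _ ⟨W, iW, dW, Φ, d, hcode, rfl⟩
      exact hcode.card_sub_graphEntropy_le_protocolEntropy hs
  linarith

theorem indexCodeEntro_le_indexCodeLen [NeZero s] : indexCodeEntro E s ≤ indexCodeLen E s := by
  refine le_csInf ⟨_, V → Fin s, inferInstance, inferInstance, id, _, isIndexCode_id E _, rfl⟩ ?_
  rintro _ ⟨W, iW, dW, Φ, d, hcode, rfl⟩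
  have hbdd : BddBelow {h : ℝ | ∃ (W : Type) (iW : Fintype W) (dW : DecidableEq W)
      (Φ : (V → Fin s) → W) (d : V → (V → Fin s) → W → Fin s),
      IsIndexCode E Φ d ∧ h = @protocolEntropy V (Fin s) W _ _ _ _ iW dW s Φ} := by
    refine ⟨0, ?_⟩
    rintro _ ⟨W, iW, dW, Φ, d, -, rfl⟩
    exact protocolEntropy_nonneg Φ
  exact (csInf_le hbdd ⟨W, iW, dW, Φ, d, hcode, rfl⟩).trans (protocolEntropy_le_protocolLength Φ)

end PublicEntropy

end GuessingGame

/-- `g(G,s) = E(G,s) ≥ E^public(G,s) ≥ g^public(G,s)`, where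
`E^public(G,s) = n − i_entro(G,s)` and `g^public(G,s) = n − i(G,s)`. -/
theorem guessing_eq_entropy_ge_public {V : Type} [Fintype V] [DecidableEq V]
    (E : V → V → Prop) [DecidableRel E] (s : ℕ) (hs : 2 ≤ s) :
    guessingNumber E s = graphEntropy E s
    ∧ (Fintype.card V : ℝ) - indexCodeEntro E s ≤ graphEntropy E s
    ∧ (Fintype.card V : ℝ) - indexCodeLen E s
        ≤ (Fintype.card V : ℝ) - indexCodeEntro E s := by
  have hs' : 1 < s := hs
  have : NeZero s := ⟨by omega⟩
  refine ⟨?_, GuessingGame.card_sub_indexCodeEntro_le_graphEntropy hs',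
    sub_le_sub_left GuessingGame.indexCodeEntro_le_indexCodeLen _⟩
  rw [GuessingGame.guessingNumber_eq_logb_maxCorrect hs',
    GuessingGame.graphEntropy_eq_logb_maxCorrect hs']
end

section
/- For the bidirected pentagon C5 over an alphabet of two letters, the public guessing number is strictly smaller than the private entropy (equivalently, the guessing number): g^public(C5,2) ≤ 5 − log_2 7 < log_2 5 = E(C5,2) = g(C5,2). -/
open Finset

/-!
Everything is governed by the confusion graph of `C5` on `{0,1}^5`, in which `x` and `y` are
adjacent when some player sees the same values in both but has to answer differently. Fibres of
an index code, correct sets of strategies and supports of distributions satisfying the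
information constraints are independent sets of it (a conditional entropy vanishes iff the
conditioning coordinates determine the others on the support), and every independent set is the
correct set of a strategy and the support of an admissible uniform distribution. Hence
`g(C5,2) = E(C5,2) = log₂ α` and every index code has at least `⌈32 / α⌉` messages, and it remains
to show `α = 5`.

Two codewords differ on a cyclic arc of length at least two, so two codewords agreeing at `k + 2`
and `k + 4` differ exactly on the edge `{k, k + 1}`. Projecting a code `S` to these two
coordinates gives `2|S| ≤ 8 + P_k`, where `P_k` counts the codewords `x` with `x + 1_{k,k+1} ∈ S`.
No codeword is paired along two consecutive edges, so `∑ P_k ≤ 2|S|` and `10|S| ≤ 40 + 2|S|`.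
-/

open Real

section NegMulLog

variable {ι : Type*} {t : Finset ι} {u : ι → ℝ}

lemma sum_negMulLog_sub_negMulLog_sum :
    ∑ i ∈ t, negMulLog (u i) - negMulLog (∑ i ∈ t, u i)
      = ∑ i ∈ t, u i * (log (∑ j ∈ t, u j) - log (u i)) := by
  simp only [negMulLog, neg_mul, sum_neg_distrib, mul_sub, sum_sub_distrib, ← sum_mul]
  ring

lemma mul_log_sum_sub_log_nonneg (hu : ∀ i ∈ t, 0 ≤ u i) {i : ι} (hi : i ∈ t) :
    0 ≤ u i * (log (∑ j ∈ t, u j) - log (u i)) := by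
  rcases (hu i hi).eq_or_lt with h | h
  · simp [← h]
  · exact mul_nonneg h.le (sub_nonneg.2 (log_le_log h (single_le_sum hu hi)))

lemma negMulLog_sum_le (hu : ∀ i ∈ t, 0 ≤ u i) :
    negMulLog (∑ i ∈ t, u i) ≤ ∑ i ∈ t, negMulLog (u i) := by
  rw [← sub_nonneg, sum_negMulLog_sub_negMulLog_sum]
  exact sum_nonneg fun i hi => mul_log_sum_sub_log_nonneg hu hi

lemma negMulLog_sum_lt (hu : ∀ i ∈ t, 0 ≤ u i) {i j : ι} (hi : i ∈ t) (hj : j ∈ t) (hij : i ≠ j)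
    (hui : 0 < u i) (huj : 0 < u j) :
    negMulLog (∑ i ∈ t, u i) < ∑ i ∈ t, negMulLog (u i) := by
  rw [← sub_pos, sum_negMulLog_sub_negMulLog_sum]
  refine sum_pos' (fun k hk => mul_log_sum_sub_log_nonneg hu hk) ⟨i, hi, ?_⟩
  have hpair : u i + u j ≤ ∑ k ∈ t, u k := by
    classical
    rw [← sum_pair hij]
    exact sum_le_sum_of_subset_of_nonneg (by simp [insert_subset_iff, hi, hj])
      fun k hk _ => hu k hk
  exact mul_pos hui (sub_pos.2 (log_lt_log hui (by linarith)))

lemma negMulLog_sum_eq_sum_negMulLog_iff (hu : ∀ i ∈ t, 0 ≤ u i) :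
    negMulLog (∑ i ∈ t, u i) = ∑ i ∈ t, negMulLog (u i) ↔
      ∀ i ∈ t, ∀ j ∈ t, u i ≠ 0 → u j ≠ 0 → i = j := by
  constructor
  · intro h i hi j hj hui huj
    by_contra hij
    exact (negMulLog_sum_lt hu hi hj hij ((hu i hi).lt_of_ne' hui)
      ((hu j hj).lt_of_ne' huj)).ne h
  · intro h
    by_cases hne : ∃ i ∈ t, u i ≠ 0
    · obtain ⟨i, hi, hui⟩ := hne
      have hzero : ∀ j ∈ t, j ≠ i → u j = 0 := fun j hj hji => by
        by_contra huj; exact hji (h j hj i hi huj hui)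
      rw [sum_eq_single_of_mem i hi hzero,
        sum_eq_single_of_mem i hi fun j hj hji => by rw [hzero j hj hji, negMulLog_zero]]
    · push Not at hne
      rw [sum_eq_zero hne, negMulLog_zero, sum_eq_zero fun i hi => by rw [hne i hi, negMulLog_zero]]

variable {α β : Type*} [Fintype α] [Fintype β] [DecidableEq β] {q : α → ℝ}

lemma sum_negMulLog_sum_fiberwise_eq_iff (hq : ∀ a, 0 ≤ q a) (f : α → β) :
    ∑ b, negMulLog (∑ a with f a = b, q a) = ∑ a, negMulLog (q a) ↔
      ∀ a a', q a ≠ 0 → q a' ≠ 0 → f a = f a' → a = a' := by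
  rw [← sum_fiberwise univ f fun a => negMulLog (q a),
    sum_eq_sum_iff_of_le fun b _ => negMulLog_sum_le fun a _ => hq a]
  simp only [mem_univ, true_implies, negMulLog_sum_eq_sum_negMulLog_iff fun a _ => hq a,
    mem_filter, true_and]
  constructor
  · intro h a a' ha ha' hf
    exact h (f a) a rfl a' hf.symm ha ha'
  · rintro h b a rfl a' hf ha ha'
    exact h a a' ha ha' hf.symm

lemma sum_negMulLog_le_log_card_support (hq : ∀ a, 0 ≤ q a) (hsum : ∑ a, q a = 1) :
    ∑ a, negMulLog (q a) ≤ log #{a | q a ≠ 0} := by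
  set t : Finset α := {a | q a ≠ 0}
  have hzero : ∀ a ∈ univ, a ∉ t → q a = 0 := by simp [t]
  have hsum_t : ∑ a ∈ t, q a = 1 := by rwa [sum_subset (subset_univ t) hzero]
  have ht : (0 : ℝ) < #t := by
    obtain ⟨a, ha, -⟩ := exists_ne_zero_of_sum_ne_zero (hsum_t.symm ▸ one_ne_zero)
    exact_mod_cast card_pos.2 ⟨a, ha⟩
  have hjensen := concaveOn_negMulLog.le_map_sum (t := t) (w := fun _ => (#t : ℝ)⁻¹)
    (p := q) (fun _ _ => by positivity) (by simp [ht.ne']) fun a _ => hq a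
  simp only [smul_eq_mul, ← mul_sum, hsum_t, mul_one, negMulLog, log_inv] at hjensen
  rw [← sum_subset (subset_univ t) fun a ha hat => by rw [hzero a ha hat, negMulLog_zero]]
  have := mul_le_mul_of_nonneg_left hjensen ht.le
  rw [← mul_assoc, mul_inv_cancel₀ ht.ne', one_mul] at this
  simpa [negMulLog, ht.ne'] using this

end NegMulLog

lemma Finset.restrict_eq_restrict_iff {ι α : Type*} {S : Finset ι} {x y : ι → α} :
    S.restrict x = S.restrict y ↔ ∀ i ∈ S, x i = y i := by
  simp [funext_iff]

section Marginal

variable {V A : Type*} [Fintype V] [DecidableEq V] [Fintype A] [DecidableEq A]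
  {p : (V → A) → ℝ}

lemma marginalPMF_eq_sum_filter (S : Finset V) (y : S → A) :
    marginalPMF p S y = ∑ x with S.restrict x = y, p x := by
  simp [marginalPMF, sum_filter, funext_iff]

lemma marginalPMF_eq_sum_marginalPMF {S T : Finset V} (hST : S ⊆ T) (z : S → A) :
    marginalPMF p S z = ∑ w with @restrict₂ V (fun _ => A) S T hST w = z, marginalPMF p T w := by
  simp_rw [marginalPMF_eq_sum_filter]
  rw [sum_fiberwise_eq_sum_filter]
  simp [← restrict₂_comp_restrict hST]

lemma marginalPMF_ne_zero_iff (hp : ∀ x, 0 ≤ p x) {S : Finset V} {y : S → A} :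
    marginalPMF p S y ≠ 0 ↔ ∃ x, p x ≠ 0 ∧ S.restrict x = y := by
  rw [marginalPMF_eq_sum_filter, Ne, sum_eq_zero_iff_of_nonneg fun x _ => hp x]
  simp [and_comm]

lemma marginalPMF_nonneg (hp : ∀ x, 0 ≤ p x) (S : Finset V) (y : S → A) :
    0 ≤ marginalPMF p S y := by
  rw [marginalPMF_eq_sum_filter]
  exact sum_nonneg fun x _ => hp x

variable {s : ℕ}

lemma Hent_univ (hp : ∀ x, 0 ≤ p x) :
    Hent s p univ = (∑ x, negMulLog (p x)) / log s := by
  unfold Hent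
  simp_rw [marginalPMF_eq_sum_filter]
  congr 1
  refine (sum_negMulLog_sum_fiberwise_eq_iff hp _).2 fun x y _ _ hxy => ?_
  simpa [funext_iff] using restrict_eq_restrict_iff.1 hxy

lemma Hent_eq_Hent_iff (hs : 1 < s) (hp : ∀ x, 0 ≤ p x) {S T : Finset V} (hST : S ⊆ T) :
    Hent s p T = Hent s p S ↔ ∀ x y, p x ≠ 0 → p y ≠ 0 →
      (∀ i ∈ S, x i = y i) → ∀ i ∈ T, x i = y i := by
  have hlog : log s ≠ 0 := (log_pos (by exact_mod_cast hs)).ne'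
  unfold Hent
  simp_rw [marginalPMF_eq_sum_marginalPMF (p := p) hST]
  rw [div_left_inj' hlog, eq_comm,
    sum_negMulLog_sum_fiberwise_eq_iff (marginalPMF_nonneg hp T)]
  simp only [marginalPMF_ne_zero_iff hp, ← restrict_eq_restrict_iff]
  constructor
  · intro h x y hx hy hxy
    exact h _ _ ⟨x, hx, rfl⟩ ⟨y, hy, rfl⟩ hxy
  · rintro h _ _ ⟨x, hx, rfl⟩ ⟨y, hy, rfl⟩ hxy
    exact h x y hx hy hxy

end Marginal

lemma SimpleGraph.indepNum_pos {α : Type*} [Finite α] [Nonempty α] (G : SimpleGraph α) :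
    0 < G.indepNum := by
  obtain ⟨a⟩ := ‹Nonempty α›
  exact Nat.lt_of_lt_of_le (by simp)
    (show G.IsIndepSet ({a} : Finset α) by simp).card_le_indepNum

section ConfusionGraph

variable {V A : Type*}

def confusionGraph (A : Type*) (E : V → V → Prop) : SimpleGraph (V → A) where
  Adj x y := ∃ j, (∀ i, E i j → x i = y i) ∧ x j ≠ y j
  symm := ⟨fun _ _ ⟨j, hN, hj⟩ => ⟨j, fun i hi => (hN i hi).symm, hj.symm⟩⟩
  loopless := ⟨fun _ ⟨_, _, hj⟩ => hj rfl⟩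

variable {E : V → V → Prop}

lemma confusionGraph_adj {x y : V → A} :
    (confusionGraph A E).Adj x y ↔ ∃ j, (∀ i, E i j → x i = y i) ∧ x j ≠ y j :=
  Iff.rfl

instance [Fintype V] [DecidableEq A] [DecidableRel E] :
    DecidableRel (confusionGraph A E).Adj :=
  fun _ _ => decidable_of_iff _ confusionGraph_adj.symm

lemma confusionGraph_adj_add_left [AddGroup A] (x a b : V → A) :
    (confusionGraph A E).Adj (x + a) (x + b) ↔ (confusionGraph A E).Adj a b := by
  simp [confusionGraph_adj]

lemma isIndepSet_confusionGraph_iff {X : Set (V → A)} :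
    (confusionGraph A E).IsIndepSet X ↔
      ∀ x ∈ X, ∀ y ∈ X, ∀ j, (∀ i, E i j → x i = y i) → x j = y j := by
  refine ⟨fun h x hx y hy j hN => ?_, fun h x hx y hy _ hxy => ?_⟩
  · by_contra hj
    exact h hx hy (fun hxy => hj (hxy ▸ rfl)) (confusionGraph_adj.2 ⟨j, hN, hj⟩)
  · obtain ⟨j, hN, hj⟩ := confusionGraph_adj.1 hxy
    exact hj (h x hx y hy j hN)

lemma IsIndexCode.isIndepSet_fiber {W : Type*} {Φ : (V → A) → W} {d : V → (V → A) → W → A}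
    (h : IsIndexCode E Φ d) (w : W) : (confusionGraph A E).IsIndepSet {x | Φ x = w} := by
  rw [isIndepSet_confusionGraph_iff]
  rintro x (rfl : Φ x = w) y (hy : Φ y = Φ x) j hN
  rw [← h.2 x j, ← h.2 y j, hy, h.1 j x y (Φ x) hN]

variable [Fintype V] [DecidableEq V] [Fintype A]

lemma IsIndexCode.card_le_card_image_mul_indepNum {W : Type*} [DecidableEq W]
    {Φ : (V → A) → W} {d : V → (V → A) → W → A} (h : IsIndexCode E Φ d) :
    Fintype.card (V → A) ≤ #(univ.image Φ) * (confusionGraph A E).indepNum := by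
  rw [← card_univ, card_eq_sum_card_image Φ univ, ← smul_eq_mul]
  refine sum_le_card_nsmul _ _ _ fun w _ => SimpleGraph.IsIndepSet.card_le_indepNum ?_
  simpa using h.isIndepSet_fiber w

variable [DecidableEq A]

lemma IsStrategy.isIndepSet_correctSet {g : V → (V → A) → A} (hg : IsStrategy E g) :
    (confusionGraph A E).IsIndepSet (correctSet g : Set (V → A)) := by
  rw [isIndepSet_confusionGraph_iff]
  intro x hx y hy j hN
  simp only [correctSet, coe_filter, mem_univ, true_and, Set.mem_ofPred_eq] at hx hy
  rw [← hx j, ← hy j, hg j x y hN]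

lemma exists_isStrategy_subset_correctSet [Nonempty A] {S : Finset (V → A)}
    (hS : (confusionGraph A E).IsIndepSet S) : ∃ g, IsStrategy E g ∧ S ⊆ correctSet g := by
  classical
  -- player `j` answers with the value at `j` of any codeword consistent with what it sees
  let guess (j : V) (v : {i // E i j} → A) : A :=
    if h : ∃ y ∈ S, ∀ i : {i // E i j}, y i = v i then (Classical.choose h) j
    else Classical.arbitrary A
  refine ⟨fun j x => guess j fun i => x i, fun j x y hxy => ?_, fun x hx => ?_⟩
  · exact congrArg (guess j) (funext fun i => hxy i.1 i.2)
  · simp only [correctSet, mem_filter, mem_univ, true_and]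
    intro j
    have h : ∃ y ∈ S, ∀ i : {i // E i j}, y i = x i := ⟨x, hx, fun _ => rfl⟩
    obtain ⟨hyS, hyx⟩ := Classical.choose_spec h
    simp only [guess, dif_pos h]
    exact isIndepSet_confusionGraph_iff.1 hS _ hyS x hx j fun i hi => hyx ⟨i, hi⟩

end ConfusionGraph

lemma logb_le_indexCodeLen {V : Type} [Fintype V] [DecidableEq V] {E : V → V → Prop}
    [DecidableRel E] {s : ℕ} (hs : 1 < s) {k : ℕ} (hk : 0 < k)
    (h : ∀ (W : Type) [Fintype W] [DecidableEq W] (Φ : (V → Fin s) → W) d,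
      IsIndexCode E Φ d → k ≤ #(univ.image Φ)) :
    logb s k ≤ indexCodeLen E s := by
  refine le_csInf ⟨_, V → Fin s, inferInstance, inferInstance, id, fun j _ w => w j,
    ⟨fun _ _ _ _ _ => rfl, fun _ _ => rfl⟩, rfl⟩ ?_
  rintro _ ⟨W, iW, dW, Φ, d, hcode, rfl⟩
  exact logb_le_logb_of_le (by exact_mod_cast hs) (by exact_mod_cast hk)
    (by exact_mod_cast h W Φ d hcode)

section Characterizations

variable {V : Type*} [Fintype V] [DecidableEq V] {E : V → V → Prop} [DecidableRel E] {s : ℕ}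

lemma maxCorrect_eq_indepNum [NeZero s] :
    maxCorrect E s = (confusionGraph (Fin s) E).indepNum := by
  obtain ⟨I, hI⟩ := (confusionGraph (Fin s) E).exists_isNIndepSet_indepNum
  obtain ⟨g, hg, hIg⟩ := exists_isStrategy_subset_correctSet hI.isIndepSet
  have hbdd :
      BddAbove {m | ∃ g : V → (V → Fin s) → Fin s, IsStrategy E g ∧ m = #(correctSet g)} :=
    ⟨Fintype.card (V → Fin s), by rintro _ ⟨g, -, rfl⟩; exact card_le_univ _⟩
  refine le_antisymm (csSup_le ⟨_, g, hg, rfl⟩ ?_) ?_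
  · rintro _ ⟨g, hg, rfl⟩
    exact hg.isIndepSet_correctSet.card_le_indepNum
  · rw [← hI.card_eq]
    exact (card_le_card hIg).trans (le_csSup hbdd ⟨g, hg, rfl⟩)

theorem guessingNumber_eq_logb_indepNum (hs : 1 < s) :
    guessingNumber E s = logb s (confusionGraph (Fin s) E).indepNum := by
  have : NeZero s := ⟨by omega⟩
  have hα := (confusionGraph (Fin s) E).indepNum_pos
  have hs' : (1 : ℝ) < s := by exact_mod_cast hs
  rw [guessingNumber, maxProb, maxCorrect_eq_indepNum, logb_div (by positivity)
    (by positivity), logb_pow, logb_self_eq_one hs']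
  ring

lemma infoConstraints_iff_isIndepSet_support (hs : 1 < s) {A : Type*} [Fintype A]
    [DecidableEq A] {p : (V → A) → ℝ} (hp : ∀ x, 0 ≤ p x) :
    InfoConstraints E s p ↔ (confusionGraph A E).IsIndepSet (Function.support p) := by
  simp only [InfoConstraints, sub_eq_zero, Hent_eq_Hent_iff hs hp (subset_insert _ _),
    isIndepSet_confusionGraph_iff, Function.mem_support, forall_mem_insert, inNbr, mem_filter,
    mem_univ, true_and]
  constructor
  · intro h x hx y hy j hN
    exact (h j x y hx hy hN).1
  · intro h j x y hx hy hN
    exact ⟨h x hx y hy j hN, hN⟩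

noncomputable def uniformOn {α : Type*} [DecidableEq α] (I : Finset α) (x : α) : ℝ :=
  if x ∈ I then (#I : ℝ)⁻¹ else 0

section UniformOn

variable {α : Type*} [DecidableEq α] {I : Finset α}

lemma uniformOn_nonneg (x : α) : 0 ≤ uniformOn I x := by
  unfold uniformOn; split_ifs <;> positivity

lemma support_uniformOn : Function.support (uniformOn I) = I := by
  ext x
  by_cases hx : x ∈ I
  · simp [uniformOn, hx, card_ne_zero_of_mem hx]
  · simp [uniformOn, hx]

lemma sum_uniformOn [Fintype α] (hI : I.Nonempty) : ∑ x, uniformOn I x = 1 := by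
  simp [uniformOn, sum_ite_mem, hI.card_pos.ne']

lemma sum_negMulLog_uniformOn [Fintype α] :
    ∑ x, negMulLog (uniformOn I x) = log #I := by
  rw [← sum_subset (subset_univ I) fun x _ hx => by simp [uniformOn, hx],
    sum_congr rfl fun x hx => by rw [uniformOn, if_pos hx], sum_const, nsmul_eq_mul,
    negMulLog, log_inv]
  rcases I.eq_empty_or_nonempty with rfl | hI
  · simp
  · field_simp [hI.card_pos.ne']

end UniformOn

theorem graphEntropy_eq_logb_indepNum (hs : 1 < s) :
    graphEntropy E s = logb s (confusionGraph (Fin s) E).indepNum := by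
  set G := confusionGraph (Fin s) E
  have hlog : 0 < log s := log_pos (by exact_mod_cast hs)
  have hle : ∀ p : (V → Fin s) → ℝ, IsProbDist p → InfoConstraints E s p →
      Hent s p univ ≤ logb s G.indepNum := by
    rintro p ⟨hp, hsum⟩ hinfo
    have hind := (infoConstraints_iff_isIndepSet_support hs hp).1 hinfo
    have hsupp : #{x | p x ≠ 0} ≤ G.indepNum :=
      SimpleGraph.IsIndepSet.card_le_indepNum (by simpa [Function.support] using hind)
    have hpos : 0 < #{x | p x ≠ 0} := by
      obtain ⟨x, -, hx⟩ := exists_ne_zero_of_sum_ne_zero (hsum.symm ▸ one_ne_zero)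
      exact card_pos.2 ⟨x, by simpa using hx⟩
    rw [Hent_univ hp, logb]
    refine div_le_div_of_nonneg_right ?_ hlog.le
    exact (sum_negMulLog_le_log_card_support hp hsum).trans
      (log_le_log (by exact_mod_cast hpos) (by exact_mod_cast hsupp))
  obtain ⟨I, hI⟩ := G.exists_isNIndepSet_indepNum
  have hIne : I.Nonempty := by
    have : NeZero s := ⟨by omega⟩
    rw [← card_pos, hI.card_eq]
    exact G.indepNum_pos
  have hmem : logb s G.indepNum ∈ {h : ℝ | ∃ p : (V → Fin s) → ℝ,
      IsProbDist p ∧ InfoConstraints E s p ∧ h = Hent s p univ} := by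
    refine ⟨uniformOn I, ⟨uniformOn_nonneg, sum_uniformOn hIne⟩,
      (infoConstraints_iff_isIndepSet_support hs uniformOn_nonneg).2 ?_, ?_⟩
    · rw [support_uniformOn]; exact hI.isIndepSet
    · rw [Hent_univ uniformOn_nonneg, sum_negMulLog_uniformOn, hI.card_eq, logb]
  unfold graphEntropy
  refine le_antisymm (csSup_le ⟨_, hmem⟩ ?_) (le_csSup ⟨logb s G.indepNum, ?_⟩ hmem)
  all_goals rintro _ ⟨p, hp, hinfo, rfl⟩; exact hle p hp hinfo

end Characterizations

section Pentagon

def edgeIndicator (k : Fin 5) : Fin 5 → Fin 2 := Pi.single k 1 + Pi.single (k + 1) 1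

lemma edgeIndicator_self : ∀ k, edgeIndicator k k = 1 := by decide

lemma edgeIndicator_add_self : ∀ k, edgeIndicator k + edgeIndicator k = 0 := by decide

lemma adj_edgeIndicator_succ :
    ∀ k, (confusionGraph (Fin 2) E5).Adj (edgeIndicator k) (edgeIndicator (k + 1)) := by
  decide

lemma eq_edgeIndicator_of_not_adj : ∀ (k : Fin 5) (d : Fin 5 → Fin 2),
    d ≠ 0 → ¬ (confusionGraph (Fin 2) E5).Adj 0 d → d (k + 2) = 0 → d (k + 4) = 0 →
      d = edgeIndicator k := by
  decide

lemma card_le_two_of_succ_notMem : ∀ K : Finset (Fin 5), (∀ k ∈ K, k + 1 ∉ K) → #K ≤ 2 := by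
  decide

def edgePaired (S : Finset (Fin 5 → Fin 2)) (k : Fin 5) : Finset (Fin 5 → Fin 2) :=
  {x ∈ S | x + edgeIndicator k ∈ S}

variable {S : Finset (Fin 5 → Fin 2)}

lemma card_edgePaired_filter_le (k : Fin 5) :
    #{x ∈ edgePaired S k | x k = 1} ≤ #{x ∈ edgePaired S k | ¬ x k = 1} := by
  refine card_le_card_of_injOn (· + edgeIndicator k) (fun x hx => ?_)
    fun x _ y _ h => add_right_cancel h
  simp only [edgePaired, mem_coe, mem_filter] at hx ⊢
  refine ⟨⟨hx.1.2, by rw [add_assoc, edgeIndicator_add_self, add_zero]; exact hx.1.1⟩, ?_⟩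
  rw [Pi.add_apply, hx.2, edgeIndicator_self]
  decide

/-- Codewords with equal coordinates `k + 2` and `k + 4` come in pairs
`{x, x + edgeIndicator k}`; dropping the member with `x k = 1` of each pair leaves a code that
these two coordinates determine. -/
lemma card_le_four_add_card_edgePaired_filter (hS : (confusionGraph (Fin 2) E5).IsIndepSet S)
    (k : Fin 5) :
    #S ≤ 4 + #{x ∈ edgePaired S k | x k = 1} := by
  have hsplit :=
    card_filter_add_card_filter_not (s := S) fun x => x + edgeIndicator k ∈ S ∧ x k = 1
  rw [edgePaired, filter_filter]
  set R := {x ∈ S | ¬ (x + edgeIndicator k ∈ S ∧ x k = 1)}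
  have hR : #R ≤ 4 := by
    have hinj : Set.InjOn (fun x : Fin 5 → Fin 2 => (x (k + 2), x (k + 4))) R := by
      intro x hx y hy hxy
      simp only [R, coe_filter, Set.mem_ofPred_eq, Prod.mk.injEq] at hx hy hxy
      by_contra hne
      have hd := eq_edgeIndicator_of_not_adj k (y - x) (sub_ne_zero.2 (Ne.symm hne))
        (by rw [← confusionGraph_adj_add_left x, add_zero, add_sub_cancel]
            exact hS hx.1 hy.1 hne)
        (by simp [hxy.1]) (by simp [hxy.2])
      have hy' : y = x + edgeIndicator k := by rw [← hd, add_sub_cancel]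
      have hx' : y + edgeIndicator k = x := by
        rw [hy', add_assoc, edgeIndicator_add_self, add_zero]
      have hxk : y k = x k + 1 := by rw [hy', Pi.add_apply, edgeIndicator_self]
      have : ∀ a : Fin 2, a = 1 ∨ a + 1 = 1 := by decide
      rcases this (x k) with h | h
      · exact hx.2 ⟨hy' ▸ hy.1, h⟩
      · exact hy.2 ⟨hx' ▸ hx.1, hxk.trans h⟩
    simpa using card_le_card_of_injOn _ (fun _ _ => mem_coe.2 (mem_univ _)) hinj
  omega

lemma two_mul_card_le_card_edgePaired (hS : (confusionGraph (Fin 2) E5).IsIndepSet S)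
    (k : Fin 5) :
    2 * #S ≤ 8 + #(edgePaired S k) := by
  have h1 := card_le_four_add_card_edgePaired_filter hS k
  have h2 := card_edgePaired_filter_le (S := S) k
  have h3 := card_filter_add_card_filter_not (s := edgePaired S k) (· k = 1)
  omega

/-- A codeword cannot be paired along two consecutive edges, so along at most two edges. -/
lemma sum_card_edgePaired_le (hS : (confusionGraph (Fin 2) E5).IsIndepSet S) :
    ∑ k, #(edgePaired S k) ≤ 2 * #S := by
  calc ∑ k, #(edgePaired S k) = ∑ x ∈ S, #{k | x + edgeIndicator k ∈ S} :=
        sum_card_bipartiteAbove_eq_sum_card_bipartiteBelow fun k x => x + edgeIndicator k ∈ S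
    _ ≤ ∑ _x ∈ S, 2 := by
        refine sum_le_sum fun x _ => card_le_two_of_succ_notMem _ fun k hk hk1 => ?_
        simp only [mem_filter, mem_univ, true_and] at hk hk1
        have hadj := (confusionGraph_adj_add_left x _ _).2 (adj_edgeIndicator_succ k)
        exact hS hk hk1 hadj.ne hadj
    _ = 2 * #S := by rw [sum_const, smul_eq_mul, mul_comm]

theorem card_le_five_of_isIndepSet (hS : (confusionGraph (Fin 2) E5).IsIndepSet S) : #S ≤ 5 := by
  have h := sum_le_sum fun k (_ : k ∈ univ) => two_mul_card_le_card_edgePaired hS k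
  have := sum_card_edgePaired_le hS
  simp only [sum_const, card_univ, Fintype.card_fin, smul_eq_mul, sum_add_distrib] at h
  omega

def pentagonCode : Finset (Fin 5 → Fin 2) :=
  {![0, 0, 0, 0, 0], ![1, 1, 0, 0, 0], ![0, 0, 1, 1, 0], ![1, 1, 0, 1, 1], ![1, 0, 1, 1, 1]}

lemma isIndepSet_pentagonCode : (confusionGraph (Fin 2) E5).IsIndepSet pentagonCode := by
  have : ∀ x ∈ pentagonCode, ∀ y ∈ pentagonCode, ¬ (confusionGraph (Fin 2) E5).Adj x y := by
    decide
  exact fun x hx y hy _ => this x hx y hy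

theorem indepNum_confusionGraph_pentagon : (confusionGraph (Fin 2) E5).indepNum = 5 := by
  obtain ⟨I, hI⟩ := (confusionGraph (Fin 2) E5).exists_isNIndepSet_indepNum
  refine le_antisymm (hI.card_eq ▸ card_le_five_of_isIndepSet hI.isIndepSet) ?_
  have hcard : #pentagonCode = 5 := by decide
  exact hcard.symm.le.trans isIndepSet_pentagonCode.card_le_indepNum

end Pentagon

lemma logb_seven_le_indexCodeLen_pentagon : logb 2 7 ≤ indexCodeLen E5 2 := by
  have h := logb_le_indexCodeLen (E := E5) (s := 2) (k := 7) one_lt_two (by norm_num)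
    fun W _ _ Φ d hcode => by
      have := hcode.card_le_card_image_mul_indepNum
      simp only [indepNum_confusionGraph_pentagon, Fintype.card_fun, Fintype.card_fin] at this
      omega
  exact_mod_cast h

lemma five_sub_logb_seven_lt_logb_five : (5 : ℝ) - logb 2 7 < logb 2 5 := by
  have h := logb_lt_logb one_lt_two (by norm_num) (by norm_num : (2 : ℝ) ^ 5 < 7 * 5)
  rw [logb_pow, logb_self_eq_one one_lt_two, logb_mul (by norm_num) (by norm_num)] at h
  push_cast at h
  linarith

/-- For the bidirected pentagon over a two-letter alphabet, the public
guessing number is strictly smaller than the private entropy (= guessing number):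
`g^public(C5,2) ≤ 5 − log_2 7 < log_2 5 = E(C5,2) = g(C5,2)`. -/
theorem pentagon_public_lt_private :
    (Fintype.card (Fin 5) : ℝ) - indexCodeLen E5 2 ≤ 5 - Real.logb 2 7
    ∧ (5 : ℝ) - Real.logb 2 7 < Real.logb 2 5
    ∧ Real.logb 2 5 = graphEntropy E5 2
    ∧ graphEntropy E5 2 = guessingNumber E5 2 := by
  have hentropy : graphEntropy E5 2 = logb 2 5 := by
    rw [graphEntropy_eq_logb_indepNum one_lt_two, indepNum_confusionGraph_pentagon]
    norm_num
  refine ⟨?_, five_sub_logb_seven_lt_logb_five, hentropy.symm, ?_⟩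
  · rw [Fintype.card_fin, Nat.cast_ofNat]
    linarith [logb_seven_le_indexCodeLen_pentagon]
  · rw [graphEntropy_eq_logb_indepNum one_lt_two, guessingNumber_eq_logb_indepNum one_lt_two]
end

section
/- Let G = (V,E) be a finite directed graph with n vertices, let B ⊆ V be a split of G of size k, let A be an alphabet of size s, and let (g_j)_{j∈V} be functions g_j : A^{N⁻(j)} → A. Then the following are equivalent: (i) with x uniform on A^V, the probability that all players guess correctly (g_j((x_i)_{i∈N⁻(j)}) = x_j for every j ∈ V) is at least (1/s)^{n−k}; (ii) for every x ∈ A^V, if x_j = g_j((x_i)_{i∈N⁻(j)}) for all j ∈ V∖B, then also x_b = g_b((x_i)_{i∈N⁻(b)}) for all b ∈ B (i.e., the functions g_j, with arguments reordered according to the split, solve the split network N_G). -/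
open Finset

/-!
Because `V ∖ B` induces an acyclic graph, every choice of values on `B` extends, by well-founded
recursion along the acyclic part, to exactly one assignment that obeys the coding functions at
all vertices outside `B`. Hence there are exactly `s ^ k` such consistent assignments, and every
assignment on which all players guess correctly is one of them. So the success probability
reaches `s ^ k / s ^ n = (1/s)^(n-k)` exactly when every consistent assignment is also correct
at the vertices of `B`, which is solvability of the split network.
-/

theorem AcyclicOn.wellFounded {V : Type*} [Finite V] {E : V → V → Prop} {S : Finset V}
    (hS : AcyclicOn E S) : WellFounded fun a b => a ∈ S ∧ b ∈ S ∧ E a b := by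
  set R : V → V → Prop := fun a b => a ∈ S ∧ b ∈ S ∧ E a b
  have : IsTrans V (Relation.TransGen R) := ⟨fun _ _ _ => Relation.TransGen.trans⟩
  have : Std.Irrefl (Relation.TransGen R) :=
    ⟨fun v hv => hS v (Relation.TransGen.head'_iff.mp hv).choose_spec.1.1 hv⟩
  exact Subrelation.wf Relation.TransGen.single (Finite.wellFounded_of_trans_of_irrefl _)

theorem WellFounded.existsUnique_forall_eq_apply {V A : Type*} [Nonempty A]
    {r : V → V → Prop} (hr : WellFounded r) (F : V → (V → A) → A)
    (hF : ∀ j x y, (∀ i, r i j → x i = y i) → F j x = F j y) :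
    ∃! x : V → A, ∀ j, x j = F j x := by
  classical
  let x : V → A := hr.fix fun j ih =>
    F j fun i => if h : r i j then ih i h else Classical.arbitrary A
  refine ⟨x, fun j => ?_, fun y hy => funext fun j => ?_⟩
  · rw [show x j = _ from hr.fix_eq _ j]
    exact hF j _ _ fun i h => by simp only [dif_pos h]; rfl
  · induction j using hr.induction with
    | _ j ih =>
      rw [hy j, show x j = _ from hr.fix_eq _ j]
      exact hF j _ _ fun i h => by simp only [dif_pos h, ih i h]; rfl

/-- The assignments computed by the split network `N_G`. -/
def consistentSet {V A : Type*} [Fintype V] [DecidableEq V] [Fintype A] [DecidableEq A]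
    (B : Finset V) (g : V → (V → A) → A) : Finset (V → A) :=
  univ.filter fun x => ∀ j ∉ B, x j = g j x

section SplitNetwork

variable {V A : Type*} [Fintype V] [DecidableEq V] [Fintype A] [DecidableEq A] {E : V → V → Prop}
  {B : Finset V} {g : V → (V → A) → A}

theorem mem_consistentSet {x : V → A} : x ∈ consistentSet B g ↔ ∀ j ∉ B, x j = g j x := by
  simp [consistentSet]

theorem correctSet_subset_consistentSet : correctSet g ⊆ consistentSet B g :=
  fun _ hx => mem_consistentSet.2 fun j _ => ((mem_filter.1 hx).2 j).symm

theorem consistentSet_subset_correctSet_iff :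
    consistentSet B g ⊆ correctSet g ↔
      ∀ x : V → A, (∀ j ∉ B, x j = g j x) → ∀ b ∈ B, x b = g b x := by
  refine ⟨fun h x hx b _ => ((mem_filter.1 (h (mem_consistentSet.2 hx))).2 b).symm,
    fun h x hx => mem_filter.2 ⟨mem_univ x, fun j => ?_⟩⟩
  by_cases hj : j ∈ B
  · exact (h x (mem_consistentSet.1 hx) j hj).symm
  · exact (mem_consistentSet.1 hx j hj).symm

theorem existsUnique_extend_mem_consistentSet [Nonempty A] (hB : AcyclicOn E (univ \ B))
    (hg : IsStrategy E g) (y : B → A) :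
    ∃! x : V → A, (∀ b : B, x b = y b) ∧ x ∈ consistentSet B g := by
  -- Reading the inputs on `B` from `y` makes the system depend only on edges inside `V ∖ B`.
  let F : V → (V → A) → A := fun j x =>
    if hj : j ∈ B then y ⟨j, hj⟩ else g j fun i => if hi : i ∈ B then y ⟨i, hi⟩ else x i
  have hF : ∀ j x z, (∀ i, (i ∈ univ \ B ∧ j ∈ univ \ B ∧ E i j) → x i = z i) →
      F j x = F j z := by
    intro j x z hxz
    by_cases hj : j ∈ B
    · simp only [F, dif_pos hj]
    · simp only [F, dif_neg hj]
      refine hg j _ _ fun i hij => ?_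
      by_cases hi : i ∈ B
      · simp only [dif_pos hi]
      · simp only [dif_neg hi]
        exact hxz i (by simp [hi, hj, hij])
  have hF_eq : ∀ x : V → A, (∀ b : B, x b = y b) →
      ∀ j, F j x = if hj : j ∈ B then y ⟨j, hj⟩ else g j x := by
    intro x hx j
    have hpatch : (fun i => if hi : i ∈ B then y ⟨i, hi⟩ else x i) = x := by
      funext i
      split_ifs with hi
      exacts [(hx ⟨i, hi⟩).symm, rfl]
    simp only [F, hpatch]
  refine existsUnique_congr (fun x => ?_) |>.1 (hB.wellFounded.existsUnique_forall_eq_apply F hF)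
  rw [mem_consistentSet]
  constructor
  · intro hx
    have hxB : ∀ b : B, x b = y b := fun b => by simp [hx b, F]
    refine ⟨hxB, fun j hj => ?_⟩
    rw [hx j, hF_eq x hxB, dif_neg hj]
  · rintro ⟨hxB, hx⟩ j
    rw [hF_eq x hxB]
    split_ifs with hj
    exacts [hxB ⟨j, hj⟩, hx j hj]

theorem card_consistentSet [Nonempty A] (hB : AcyclicOn E (univ \ B)) (hg : IsStrategy E g) :
    (consistentSet B g).card = Fintype.card A ^ B.card := by
  have hext := existsUnique_extend_mem_consistentSet hB hg
  calc (consistentSet B g).card = (univ : Finset (B → A)).card := by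
        refine card_nbij (fun x b => x b) (fun _ _ => mem_univ _) ?_ ?_
        · intro x hx z hz hxz
          exact (hext fun b => x b).unique ⟨fun _ => rfl, hx⟩
            ⟨fun b => (congrFun hxz b).symm, hz⟩
        · intro y _
          obtain ⟨x, ⟨hxy, hx⟩, -⟩ := hext y
          exact ⟨x, hx, funext hxy⟩
    _ = Fintype.card A ^ B.card := by simp

end SplitNetwork

theorem one_div_pow_sub_le_div_pow_iff {s k n m : ℕ} (hs : 0 < s) (hkn : k ≤ n) :
    ((1 : ℝ) / s) ^ (n - k) ≤ (m : ℝ) / (s : ℝ) ^ n ↔ s ^ k ≤ m := by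
  have hsR : (0 : ℝ) < s := by exact_mod_cast hs
  have hpow : ((1 : ℝ) / s) ^ (n - k) = (s : ℝ) ^ k / (s : ℝ) ^ n := by
    rw [eq_div_iff (pow_pos hsR n).ne', div_pow, one_pow, div_mul_eq_mul_div, one_mul,
      ← pow_sub_mul_pow _ hkn, mul_div_cancel_left₀ _ (pow_pos hsR _).ne']
  rw [hpow, div_le_div_iff_of_pos_right (pow_pos hsR n)]
  exact_mod_cast Iff.rfl

theorem split_network_solvable_iff_guessing_general {V : Type} [Fintype V] [DecidableEq V]
    (E : V → V → Prop) (B : Finset V)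
    (hB : AcyclicOn E (Finset.univ \ B)) (s : ℕ) (hs : 2 ≤ s)
    (g : V → (V → Fin s) → Fin s) (hg : IsStrategy E g) :
    (((1 : ℝ) / s) ^ (Fintype.card V - B.card)
        ≤ ((correctSet g).card : ℝ) / (s : ℝ) ^ Fintype.card V)
    ↔ (∀ x : V → Fin s, (∀ j, j ∉ B → x j = g j x) → ∀ b ∈ B, x b = g b x) := by
  have : NeZero s := ⟨by omega⟩
  have hcard : (consistentSet B g).card = s ^ B.card := by
    simpa using card_consistentSet hB hg
  rw [one_div_pow_sub_le_div_pow_iff (by omega) (card_le_univ B), ← hcard,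
    ← consistentSet_subset_correctSet_iff]
  exact ⟨fun h => (eq_of_subset_of_card_le correctSet_subset_consistentSet h).ge, card_le_card⟩

/-- Let `B` be a split of `G` (i.e. `V ∖ B` induces an acyclic
subgraph) of size `k`, and let `g` be a guessing strategy. Then the probability that all
players guess correctly is at least `(1/s)^(n−k)` iff the functions `g_j` solve the split
network: whenever `x` is consistent with the coding functions at all nodes outside `B`,
every output node `b ∈ B` reproduces `x b`. -/
theorem split_network_solvable_iff_guessing {V : Type} [Fintype V] [DecidableEq V]
    (E : V → V → Prop) [DecidableRel E] (B : Finset V)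
    (hB : AcyclicOn E (Finset.univ \ B)) (s : ℕ) (hs : 2 ≤ s)
    (g : V → (V → Fin s) → Fin s) (hg : IsStrategy E g) :
    (((1 : ℝ) / s) ^ (Fintype.card V - B.card)
        ≤ ((correctSet g).card : ℝ) / (s : ℝ) ^ Fintype.card V)
    ↔ (∀ x : V → Fin s, (∀ j, j ∉ B → x j = g j x) → ∀ b ∈ B, x b = g b x) :=
  split_network_solvable_iff_guessing_general E B hB s hs g hg
end
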